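/- arXiv:1711.11143 — 3 statements merged into one kernel-verified Lean document; each statement's English description precedes it below -/
import Mathlib

section
/- Suppose {a_n} and {b_n} are sequences with 1 > a_0 ≥ b_0 ≥ a_1 ≥ b_1 ≥ ... ≥ a_n ≥ b_n ≥ 0, and there is a constant C_1 > 1 such that b_{n+1} ≤ C_1^n a_n^{q_2 + 2/d} + C_1^n a_n^{2/d} b_n^{q_1} and a_{n+1} ≤ C_1^n a_n^{q_2 + 2/(d+2)} + C_1^n b_n^{q_1} a_n^{2/(d+2)} for all n, where q_1 = 1 - 2/p, q_2 = 1 - 1/p and p > d + 4/(d+2) with d ≥ 2. Then if a_0 is sufficiently small (depending only on C_1, p, d), both a_n → 0 and b_n → 0 as n → ∞. -/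
open Filter

/-- auxiliary exponent sequences -/
noncomputable def seqXY (s2 sd u M η : ℝ) : ℕ → ℝ × ℝ
  | 0 => (1, 1)
  | n + 1 =>
      ((1 - η) * (s2 * (seqXY s2 sd u M η n).1 + u * (seqXY s2 sd u M η n).2),
       (1 - η) * min (sd * (seqXY s2 sd u M η n).1 + u * (seqXY s2 sd u M η n).2)
         (M * (s2 * (seqXY s2 sd u M η n).1 + u * (seqXY s2 sd u M η n).2)))


lemma seqXY_zero (s2 sd u M η : ℝ) : seqXY s2 sd u M η 0 = (1, 1) := by
  simp [seqXY]

lemma seqXY_succ (s2 sd u M η : ℝ) (n : ℕ) : seqXY s2 sd u M η (n + 1) =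
      ((1 - η) * (s2 * (seqXY s2 sd u M η n).1 + u * (seqXY s2 sd u M η n).2),
       (1 - η) * min (sd * (seqXY s2 sd u M η n).1 + u * (seqXY s2 sd u M η n).2)
         (M * (s2 * (seqXY s2 sd u M η n).1 + u * (seqXY s2 sd u M η n).2))) := by
  rw [seqXY]

lemma lin2 (A B M x y : ℝ) (hx : 0 < x) (hxy : x ≤ y) (hyM : y ≤ M * x)
    (h1 : 0 ≤ A + B) (h2 : 0 ≤ A + B * M) : 0 ≤ A * x + B * y := by
  rcases le_or_gt 0 B with hB | hB
  · nlinarith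
  · nlinarith

lemma lyap (s2 sd u M κ ρ x y : ℝ) (hκ : 0 < κ)
    (hx : 0 < x) (hxy : x ≤ y) (hyM : y ≤ M * x)
    (hC1 : ρ * (1 + κ) ≤ s2 + κ * sd + u * (1 + κ))
    (hC2 : ρ * (1 + κ * M) ≤ s2 + κ * sd + (u * M) * (1 + κ))
    (hC3 : ρ * (1 + κ) ≤ (1 + κ * M) * (s2 + u))
    (hC4 : ρ ≤ s2 + u * M) (hκM : 0 < 1 + κ * M) :
    ρ * (x + κ * y) ≤ (s2 * x + u * y) + κ * min (sd * x + u * y) (M * (s2 * x + u * y)) := by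
  rcases min_cases (sd * x + u * y) (M * (s2 * x + u * y)) with ⟨he, _⟩ | ⟨he, _⟩ <;> rw [he]
  · have := lin2 (s2 + κ * sd - ρ) (u * (1 + κ) - ρ * κ) M x y hx hxy hyM
      (by nlinarith) (by nlinarith)
    nlinarith
  · have := lin2 ((1 + κ * M) * s2 - ρ) ((1 + κ * M) * u - ρ * κ) M x y hx hxy hyM
      (by nlinarith) (by nlinarith)
    nlinarith

lemma choose_rho (s2 sd M κ t : ℝ) (hs2 : 0 < s2) (hssd : s2 ≤ sd)
    (hupos : 0 < 1 - t) (hM1 : 1 < M) (huM : (1 - t) * M = 1 - t / 2)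
    (hts2 : t / 2 < s2) (hκ : 0 < κ) (ht : 0 < t)
    (hfact1 : t - s2 < κ * (sd - t)) (hfact2 : κ * (M * t - sd) < s2 - t / 2)
    (hM3 : s2 ≤ t → sd - t ≤ M * (s2 + (1 - t)) - 1) :
    ∃ ρ : ℝ, 1 < ρ ∧
      ρ * (1 + κ) ≤ s2 + κ * sd + (1 - t) * (1 + κ) ∧
      ρ * (1 + κ * M) ≤ s2 + κ * sd + ((1 - t) * M) * (1 + κ) ∧
      ρ * (1 + κ) ≤ (1 + κ * M) * (s2 + (1 - t)) ∧
      ρ ≤ s2 + (1 - t) * M := by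
  have hκ1 : (0:ℝ) < 1 + κ := by linarith
  have hκM : (0:ℝ) < 1 + κ * M := by nlinarith
  have hMt : M * t = M - 1 + t / 2 := by linear_combination -huM
  have S1 : 1 + κ < s2 + κ * sd + (1 - t) * (1 + κ) := by nlinarith [hfact1]
  have S2 : 1 + κ * M < s2 + κ * sd + ((1 - t) * M) * (1 + κ) := by
    have h3 : κ * (M * t) = κ * M - κ + κ * (t / 2) := by rw [hMt]; ring
    nlinarith [hfact2, h3]
  have S3 : 1 + κ < (1 + κ * M) * (s2 + (1 - t)) := by
    rcases le_or_gt s2 t with h | h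
    · have h4 := hM3 h
      nlinarith [mul_le_mul_of_nonneg_left h4 hκ.le, hfact1]
    · nlinarith [mul_pos hκ (sub_pos.2 hM1)]
  have S4 : 1 < s2 + (1 - t) * M := by rw [huM]; linarith
  set A1 := s2 + κ * sd + (1 - t) * (1 + κ) with hA1
  set A2 := s2 + κ * sd + ((1 - t) * M) * (1 + κ) with hA2
  set A3 := (1 + κ * M) * (s2 + (1 - t)) with hA3
  set A4 := s2 + (1 - t) * M with hA4
  refine ⟨min (min (A1 / (1 + κ)) (A2 / (1 + κ * M))) (min (A3 / (1 + κ)) A4),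
    ?_, ?_, ?_, ?_, ?_⟩
  · exact lt_min (lt_min ((one_lt_div hκ1).2 S1) ((one_lt_div hκM).2 S2))
      (lt_min ((one_lt_div hκ1).2 S3) S4)
  · have h : min (min (A1 / (1 + κ)) (A2 / (1 + κ * M))) (min (A3 / (1 + κ)) A4)
        ≤ A1 / (1 + κ) := (min_le_left _ _).trans (min_le_left _ _)
    exact (mul_le_mul_of_nonneg_right h hκ1.le).trans
      (le_of_eq (div_mul_cancel₀ _ hκ1.ne'))
  · have h : min (min (A1 / (1 + κ)) (A2 / (1 + κ * M))) (min (A3 / (1 + κ)) A4)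
        ≤ A2 / (1 + κ * M) := (min_le_left _ _).trans (min_le_right _ _)
    exact (mul_le_mul_of_nonneg_right h hκM.le).trans
      (le_of_eq (div_mul_cancel₀ _ hκM.ne'))
  · have h : min (min (A1 / (1 + κ)) (A2 / (1 + κ * M))) (min (A3 / (1 + κ)) A4)
        ≤ A3 / (1 + κ) := (min_le_right _ _).trans (min_le_left _ _)
    exact (mul_le_mul_of_nonneg_right h hκ1.le).trans
      (le_of_eq (div_mul_cancel₀ _ hκ1.ne'))
  · exact (min_le_right _ _).trans (min_le_right _ _)

lemma numeric (D t : ℝ) (hD : 2 ≤ D) (ht : 0 < t)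
    (hkey : t * (D ^ 2 + 2 * D + 4) < 2 * (D + 2)) :
    ∃ κ ρ : ℝ, 0 < κ ∧ 1 < ρ ∧
      ρ * (1 + κ) ≤ 2 / (D + 2) + κ * (2 / D) + (1 - t) * (1 + κ) ∧
      ρ * (1 + κ * ((1 - t / 2) / (1 - t))) ≤
        2 / (D + 2) + κ * (2 / D) + ((1 - t) * ((1 - t / 2) / (1 - t))) * (1 + κ) ∧
      ρ * (1 + κ) ≤ (1 + κ * ((1 - t / 2) / (1 - t))) * (2 / (D + 2) + (1 - t)) ∧
      ρ ≤ 2 / (D + 2) + (1 - t) * ((1 - t / 2) / (1 - t)) := by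
  have hD0 : (0:ℝ) < D := by linarith
  have hD2 : (0:ℝ) < D + 2 := by linarith
  have ht1 : t < 1 := by nlinarith
  have hupos : (0:ℝ) < 1 - t := by linarith
  have htD : t * D < 2 := by nlinarith
  have htD2 : t * (D + 2) < 4 := by nlinarith
  set s2 : ℝ := 2 / (D + 2) with hs2def
  set sd : ℝ := 2 / D with hsddef
  set M : ℝ := (1 - t / 2) / (1 - t) with hMdef
  have hs2 : 0 < s2 := by positivity
  have hsd : 0 < sd := by positivity
  have hssd : s2 ≤ sd := by
    rw [hs2def, hsddef, div_le_div_iff₀ hD2 hD0]; linarith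
  have huM : (1 - t) * M = 1 - t / 2 := mul_div_cancel₀ _ hupos.ne'
  have hM1 : 1 < M := by rw [hMdef, lt_div_iff₀ hupos]; linarith
  have hsdt : t < sd := by rw [hsddef, lt_div_iff₀ hD0]; linarith
  have hts2 : t / 2 < s2 := by rw [hs2def, div_lt_div_iff₀ two_pos hD2]; linarith
  have hG : (0:ℝ) < 2 * (D + 2) - t * (D ^ 2 + 2 * D + 4) := by linarith
  have hpoly : (t * (D + 2) - 2) * (t * D * (2 - t) - 4 * (1 - t)) <
      (4 - t * (D + 2)) * (2 - t * D) * (1 - t) := by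
    nlinarith [mul_pos ht hG]
  -- choice of κ
  obtain ⟨κ, hκpos, hfact1, hfact2⟩ :
      ∃ κ : ℝ, 0 < κ ∧ t - s2 < κ * (sd - t) ∧ κ * (M * t - sd) < s2 - t / 2 := by
    have hsdtpos : (0:ℝ) < sd - t := by linarith
    rcases le_or_gt (M * t) sd with hMt | hMt
    · refine ⟨max ((t - s2) / (sd - t)) 0 + 1, by positivity, ?_, ?_⟩
      · have h1 : (t - s2) / (sd - t) < max ((t - s2) / (sd - t)) 0 + 1 := by
          have := le_max_left ((t - s2) / (sd - t)) 0; linarith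
        exact (div_lt_iff₀ hsdtpos).1 h1
      · have h2 : (max ((t - s2) / (sd - t)) 0 + 1) * (M * t - sd) ≤ 0 :=
          mul_nonpos_of_nonneg_of_nonpos (by positivity) (by linarith)
        linarith
    · have hub : (0:ℝ) < s2 - t / 2 := by linarith
      have hMtsd : (0:ℝ) < M * t - sd := by linarith
      have hKEY : (t - s2) * (M * t - sd) < (s2 - t / 2) * (sd - t) := by
        have hfac : (0:ℝ) < 2 * (1 - t) * D * (D + 2) := by positivity
        have e1 : (t - s2) * (M * t - sd) * (2 * (1 - t) * D * (D + 2)) =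
            (t * (D + 2) - 2) * (t * D * (2 - t) - 4 * (1 - t)) := by
          rw [hs2def, hsddef, hMdef]; field_simp; ring
        have e2 : (s2 - t / 2) * (sd - t) * (2 * (1 - t) * D * (D + 2)) =
            (4 - t * (D + 2)) * (2 - t * D) * (1 - t) := by
          rw [hs2def, hsddef]; field_simp; ring
        have hmul : (t - s2) * (M * t - sd) * (2 * (1 - t) * D * (D + 2)) <
            (s2 - t / 2) * (sd - t) * (2 * (1 - t) * D * (D + 2)) := by
          rw [e1, e2]; exact hpoly
        exact lt_of_mul_lt_mul_right hmul hfac.le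
      have hlt : max ((t - s2) / (sd - t)) 0 < (s2 - t / 2) / (M * t - sd) := by
        apply max_lt
        · rw [div_lt_div_iff₀ hsdtpos hMtsd]; nlinarith [hKEY]
        · exact div_pos hub hMtsd
      refine ⟨(max ((t - s2) / (sd - t)) 0 + (s2 - t / 2) / (M * t - sd)) / 2, ?_, ?_, ?_⟩
      · have h0 : (0:ℝ) ≤ max ((t - s2) / (sd - t)) 0 := le_max_right _ _
        have := div_pos hub hMtsd
        linarith
      · have h1 : (t - s2) / (sd - t) <
            (max ((t - s2) / (sd - t)) 0 + (s2 - t / 2) / (M * t - sd)) / 2 := by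
          have := le_max_left ((t - s2) / (sd - t)) 0; linarith
        exact (div_lt_iff₀ hsdtpos).1 h1
      · have h2 : (max ((t - s2) / (sd - t)) 0 + (s2 - t / 2) / (M * t - sd)) / 2 <
            (s2 - t / 2) / (M * t - sd) := by linarith
        exact (lt_div_iff₀ hMtsd).1 h2
  -- the extra fact for case s2 ≤ t
  have hM3 : s2 ≤ t → sd - t ≤ M * (s2 + (1 - t)) - 1 := by
    intro h
    have h2 : 2 ≤ t * (D + 2) := by
      rw [hs2def, div_le_iff₀ hD2] at h; linarith
    have hH : 0 ≤ 4 * D - 2 * D * t + t * D * (D + 2) * (1 - t) - 4 * (D + 2) * (1 - t) := by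
      nlinarith [mul_nonneg (mul_nonneg hD0.le (by linarith : (0:ℝ) ≤ t * (D + 2) - 2)) hupos.le,
        mul_nonneg (by linarith : (0:ℝ) ≤ t * (D + 2) - 2) hupos.le, sq_nonneg (D - 2)]
    have e3 : M * (s2 + (1 - t)) - 1 - (sd - t) =
        (4 * D - 2 * D * t + t * D * (D + 2) * (1 - t) - 4 * (D + 2) * (1 - t)) /
          (2 * D * (D + 2) * (1 - t)) := by
      rw [hs2def, hsddef, hMdef]; field_simp; ring
    have : (0:ℝ) ≤ M * (s2 + (1 - t)) - 1 - (sd - t) := by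
      rw [e3]; positivity
    linarith
  obtain ⟨ρ, hρ, hc1, hc2, hc3, hc4⟩ :=
    choose_rho s2 sd M κ t hs2 hssd hupos hM1 huM hts2 hκpos ht hfact1 hfact2 hM3
  exact ⟨κ, ρ, hκpos, hρ, hc1, hc2, hc3, hc4⟩ 

set_option maxHeartbeats 2000000 in
theorem stmt_4 (d : ℕ) (hd : 2 ≤ d) (p : ℝ) (hp : (d : ℝ) + 4 / ((d : ℝ) + 2) < p)
    (C₁ : ℝ) (hC₁ : 1 < C₁) :
    ∃ ε : ℝ, 0 < ε ∧ ∀ a b : ℕ → ℝ,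
      a 0 < 1 → (∀ n, 0 ≤ b n) → (∀ n, b n ≤ a n) → (∀ n, a (n + 1) ≤ b n) →
      (∀ n : ℕ, b (n + 1) ≤ C₁ ^ n * a n ^ ((1 - 1 / p) + 2 / (d : ℝ)) +
        C₁ ^ n * a n ^ (2 / (d : ℝ)) * b n ^ (1 - 2 / p)) →
      (∀ n : ℕ, a (n + 1) ≤ C₁ ^ n * a n ^ ((1 - 1 / p) + 2 / ((d : ℝ) + 2)) +
        C₁ ^ n * b n ^ (1 - 2 / p) * a n ^ (2 / ((d : ℝ) + 2))) →
      a 0 ≤ ε →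
      Filter.Tendsto a Filter.atTop (nhds 0) ∧ Filter.Tendsto b Filter.atTop (nhds 0) := by
  have hd2 : (2:ℝ) ≤ (d:ℝ) := by exact_mod_cast hd
  set D : ℝ := (d:ℝ) with hDdef
  have hD0 : (0:ℝ) < D := by linarith
  have hD2 : (0:ℝ) < D + 2 := by linarith
  have hppos : 0 < p := by
    have h4 : (0:ℝ) < 4 / (D + 2) := by positivity
    linarith
  set t : ℝ := 2 / p with htdef
  have ht : 0 < t := by positivity
  have hQ : D ^ 2 + 2 * D + 4 < p * (D + 2) := by
    have h1 := mul_lt_mul_of_pos_right hp hD2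
    have h2 : 4 / (D + 2) * (D + 2) = 4 := div_mul_cancel₀ _ hD2.ne'
    nlinarith only [h1, h2]
  have hkey : t * (D ^ 2 + 2 * D + 4) < 2 * (D + 2) := by
    rw [htdef, div_mul_eq_mul_div, div_lt_iff₀ hppos]
    nlinarith only [hQ]
  have ht1 : t < 1 := by nlinarith only [hkey, sq_nonneg D, ht, hd2]
  obtain ⟨κ, ρ, hκ, hρ, hc1, hc2, hc3, hc4⟩ := numeric D t hd2 ht hkey
  set M : ℝ := (1 - t / 2) / (1 - t) with hMdef
  set s2 : ℝ := 2 / (D + 2) with hs2def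
  set sd : ℝ := 2 / D with hsddef
  set u : ℝ := 1 - t with hudef
  have hupos : 0 < u := by rw [hudef]; linarith
  have hs2 : 0 < s2 := by rw [hs2def]; positivity
  have hsd : 0 < sd := by rw [hsddef]; positivity
  have hssd : s2 ≤ sd := by
    rw [hs2def, hsddef, div_le_div_iff₀ hD2 hD0]; linarith
  have huM : u * M = 1 - t / 2 := by
    rw [hudef, hMdef]; exact mul_div_cancel₀ _ (by linarith : (1:ℝ) - t ≠ 0)
  have hM1 : 1 < M := by
    rw [hMdef, lt_div_iff₀ (by linarith : (0:ℝ) < 1 - t)]; linarith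
  have hMpos : 0 < M := by linarith
  have hκ1 : (0:ℝ) < 1 + κ := by linarith
  have hκM : (0:ℝ) < 1 + κ * M := by
    have h := mul_pos hκ hMpos; linarith only [h]
  -- exponent identities
  have ht2 : t / 2 = 1 / p := by rw [htdef]; ring
  have h1p : 1 - 1 / p = u * M := by rw [← ht2]; linarith [huM]
  have heB : 1 - 1 / p + sd = sd + u * M := by linarith [h1p]
  have heA : 1 - 1 / p + s2 = s2 + u * M := by linarith [h1p]
  have huMpos : 0 < u * M := mul_pos hupos hMpos
  have hC₁pos : (0:ℝ) < C₁ := by linarith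
  clear_value D t s2 sd u M
  -- parameters
  set η : ℝ := (ρ - 1) / (2 * ρ) with hηdef
  set ρ2 : ℝ := (1 + ρ) / 2 with hρ2def
  have hρpos : (0:ℝ) < ρ := by linarith
  have hη0 : 0 < η := by
    rw [hηdef]; exact div_pos (by linarith) (by linarith)
  have hη1 : η < 1 := by
    rw [hηdef, div_lt_one (by linarith)]; linarith
  have h1η : (0:ℝ) < 1 - η := by linarith
  have hηρ : (1 - η) * ρ = ρ2 := by
    rw [hηdef, hρ2def]; field_simp; ring
  have hρ2 : 1 < ρ2 := by rw [hρ2def]; linarith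
  have hρ2pos : (0:ℝ) < ρ2 := by linarith
  have hρ21 : (0:ℝ) < ρ2 - 1 := by linarith
  clear_value η ρ2
  -- the exponent sequences
  obtain ⟨X, Y, hX0, hY0, hXs, hYs⟩ :
      ∃ X Y : ℕ → ℝ, X 0 = 1 ∧ Y 0 = 1 ∧
        (∀ n, X (n + 1) = (1 - η) * (s2 * X n + u * Y n)) ∧
        (∀ n, Y (n + 1) = (1 - η) *
          min (sd * X n + u * Y n) (M * (s2 * X n + u * Y n))) := by
    refine ⟨fun n => (seqXY s2 sd u M η n).1, fun n => (seqXY s2 sd u M η n).2,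
      ?_, ?_, ?_, ?_⟩
    · simp [seqXY_zero]
    · simp [seqXY_zero]
    · intro n; simp [seqXY_succ]
    · intro n; simp [seqXY_succ]
  have hInv : ∀ n, 0 < X n ∧ X n ≤ Y n ∧ Y n ≤ M * X n ∧
      (1 + κ) * ρ2 ^ n ≤ X n + κ * Y n := by
    intro n
    induction n with
    | zero =>
      rw [hX0, hY0]
      refine ⟨one_pos, le_refl _, by linarith, by simp⟩
    | succ n ih =>
      obtain ⟨hx, hxy, hyM, hW⟩ := ih
      have hy : 0 < Y n := lt_of_lt_of_le hx hxy
      have hS'pos : 0 < s2 * X n + u * Y n :=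
        add_pos (mul_pos hs2 hx) (mul_pos hupos hy)
      have hxpos' : 0 < X (n + 1) := by
        rw [hXs n]; exact mul_pos h1η hS'pos
      have hxy' : X (n + 1) ≤ Y (n + 1) := by
        rw [hXs n, hYs n]
        apply mul_le_mul_of_nonneg_left _ h1η.le
        apply le_min
        · have h := mul_le_mul_of_nonneg_right hssd hx.le
          linarith
        · have h := (le_mul_iff_one_le_left hS'pos).2 hM1.le
          linarith
      have hyM' : Y (n + 1) ≤ M * X (n + 1) := by
        rw [hXs n, hYs n]
        calc (1 - η) * min (sd * X n + u * Y n) (M * (s2 * X n + u * Y n))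
            ≤ (1 - η) * (M * (s2 * X n + u * Y n)) :=
              mul_le_mul_of_nonneg_left (min_le_right _ _) h1η.le
          _ = M * ((1 - η) * (s2 * X n + u * Y n)) := by ring
      have hW' : (1 + κ) * ρ2 ^ (n + 1) ≤ X (n + 1) + κ * Y (n + 1) := by
        have hly := lyap s2 sd u M κ ρ (X n) (Y n) hκ hx hxy hyM hc1 hc2 hc3 hc4 hκM
        have h2 : (1 - η) * (ρ * (X n + κ * Y n)) ≤ X (n + 1) + κ * Y (n + 1) := by
          rw [hXs n, hYs n]
          have hmul := mul_le_mul_of_nonneg_left hly h1η.le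
          linarith only [hmul]
        have h3 : ρ2 * ((1 + κ) * ρ2 ^ n) ≤ ρ2 * (X n + κ * Y n) :=
          mul_le_mul_of_nonneg_left hW hρ2pos.le
        calc (1 + κ) * ρ2 ^ (n + 1) = ρ2 * ((1 + κ) * ρ2 ^ n) := by ring
          _ ≤ ρ2 * (X n + κ * Y n) := h3
          _ = (1 - η) * (ρ * (X n + κ * Y n)) := by rw [← hηρ]; ring
          _ ≤ X (n + 1) + κ * Y (n + 1) := h2
      exact ⟨hxpos', hxy', hyM', hW'⟩
  have hXlb : ∀ n, (1 + κ) / (1 + κ * M) * ρ2 ^ n ≤ X n := by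
    intro n
    obtain ⟨hx, hxy, hyM, hW⟩ := hInv n
    rw [div_mul_eq_mul_div, div_le_iff₀ hκM]
    have h := mul_le_mul_of_nonneg_left hyM hκ.le
    linarith only [h, hW]
  -- choice of θ
  set γ : ℝ := η * s2 * ((1 + κ) / (1 + κ * M)) with hγdef
  have hγ : 0 < γ := by
    rw [hγdef]; exact mul_pos (mul_pos hη0 hs2) (div_pos hκ1 hκM)
  clear_value γ
  set θ : ℝ := min ((1/2 : ℝ) ^ (1/γ : ℝ)) ((C₁⁻¹ : ℝ) ^ (1 / (γ * (ρ2 - 1)) : ℝ)) with hθdef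
  have hθpos : 0 < θ :=
    lt_min (Real.rpow_pos_of_pos (by norm_num) _)
      (Real.rpow_pos_of_pos (inv_pos.2 hC₁pos) _)
  have hθ1 : θ < 1 :=
    lt_of_le_of_lt (min_le_left _ _)
      (Real.rpow_lt_one (by norm_num) (by norm_num) (one_div_pos.2 hγ))
  have hθa : θ ≤ (1/2 : ℝ) ^ (1/γ : ℝ) := min_le_left _ _
  have hθb : θ ≤ (C₁⁻¹ : ℝ) ^ (1 / (γ * (ρ2 - 1)) : ℝ) := min_le_right _ _
  clear_value θ
  have hexp1 : θ ^ (γ : ℝ) ≤ 1/2 := by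
    have h := Real.rpow_le_rpow hθpos.le hθa hγ.le
    rwa [← Real.rpow_mul (by norm_num : (0:ℝ) ≤ 1/2),
      one_div_mul_cancel hγ.ne', Real.rpow_one] at h
  have hexp2 : C₁ * θ ^ (γ * (ρ2 - 1)) ≤ 1 := by
    have hpos : (0:ℝ) < γ * (ρ2 - 1) := mul_pos hγ hρ21
    have h := Real.rpow_le_rpow hθpos.le hθb hpos.le
    rw [← Real.rpow_mul (inv_pos.2 hC₁pos).le,
      one_div_mul_cancel hpos.ne', Real.rpow_one] at h
    calc C₁ * θ ^ (γ * (ρ2 - 1)) ≤ C₁ * C₁⁻¹ :=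
        mul_le_mul_of_nonneg_left h hC₁pos.le
      _ = 1 := mul_inv_cancel₀ hC₁pos.ne'
  have hKA : ∀ n : ℕ, 2 * C₁ ^ n * θ ^ (γ * ρ2 ^ n) ≤ 1 := by
    intro n
    have hb : 1 + (n:ℝ) * (ρ2 - 1) ≤ ρ2 ^ n := by
      have h := one_add_mul_le_pow (by linarith : (-2:ℝ) ≤ ρ2 - 1) n
      have he : (1 + (ρ2 - 1)) = ρ2 := by ring
      rwa [he] at h
    have h2 : θ ^ (γ * ρ2 ^ n) ≤ θ ^ (γ + (n:ℝ) * (γ * (ρ2 - 1))) := by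
      apply Real.rpow_le_rpow_of_exponent_ge hθpos hθ1.le
      have h := mul_le_mul_of_nonneg_left hb hγ.le
      linarith only [h]
    have h3 : θ ^ (γ + (n:ℝ) * (γ * (ρ2 - 1))) = θ ^ (γ:ℝ) * (θ ^ (γ * (ρ2 - 1))) ^ n := by
      rw [Real.rpow_add hθpos, mul_comm ((n:ℝ)) (γ * (ρ2 - 1)),
        Real.rpow_mul hθpos.le, Real.rpow_natCast]
    have hA : (C₁ * θ ^ (γ * (ρ2 - 1))) ^ n ≤ 1 :=
      pow_le_one₀ (mul_nonneg hC₁pos.le (Real.rpow_nonneg hθpos.le _)) hexp2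
    have hθγpos : (0:ℝ) < θ ^ (γ:ℝ) := Real.rpow_pos_of_pos hθpos _
    calc 2 * C₁ ^ n * θ ^ (γ * ρ2 ^ n)
        ≤ 2 * C₁ ^ n * (θ ^ (γ:ℝ) * (θ ^ (γ * (ρ2 - 1))) ^ n) := by
          apply mul_le_mul_of_nonneg_left _
            (mul_nonneg (by norm_num) (pow_nonneg hC₁pos.le n))
          rw [← h3]; exact h2
      _ = 2 * θ ^ (γ:ℝ) * ((C₁ * θ ^ (γ * (ρ2 - 1))) ^ n) := by
          rw [mul_pow]; ring
      _ ≤ 2 * (1/2) * 1 := by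
          apply mul_le_mul _ hA
            (pow_nonneg (mul_nonneg hC₁pos.le (Real.rpow_nonneg hθpos.le _)) n)
            (by norm_num)
          linarith [hexp1]
      _ = 1 := by norm_num
  -- conclusion
  refine ⟨θ, hθpos, ?_⟩
  intro a b _ hb0 hba _ hrB hrA ha0
  have h0a : ∀ n, 0 ≤ a n := fun n => (hb0 n).trans (hba n)
  have hAB : ∀ n, a n ≤ θ ^ (X n) ∧ b n ≤ θ ^ (Y n) := by
    intro n
    induction n with
    | zero =>
      rw [hX0, hY0, Real.rpow_one]
      exact ⟨ha0, (hba 0).trans ha0⟩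
    | succ n ih =>
      obtain ⟨hx, hxy, hyM, _⟩ := hInv n
      obtain ⟨hA, hB⟩ := ih
      have hy : 0 < Y n := lt_of_lt_of_le hx hxy
      have hgapbase : γ * ρ2 ^ n ≤ η * (s2 * X n) := by
        have h := mul_le_mul_of_nonneg_left (hXlb n) (mul_pos hη0 hs2).le
        calc γ * ρ2 ^ n = η * s2 * ((1 + κ) / (1 + κ * M) * ρ2 ^ n) := by
              rw [hγdef]; ring
          _ ≤ η * s2 * X n := h
          _ = η * (s2 * X n) := by ring
      have hgapX : X (n + 1) + γ * ρ2 ^ n ≤ s2 * X n + u * Y n := by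
        rw [hXs n]
        have h0 : (0:ℝ) < u * Y n := mul_pos hupos hy
        have h2 : η * (s2 * X n) ≤ η * (s2 * X n + u * Y n) :=
          mul_le_mul_of_nonneg_left (by linarith only [h0]) hη0.le
        linarith only [hgapbase, h2]
      have hgapY : Y (n + 1) + γ * ρ2 ^ n ≤ sd * X n + u * Y n := by
        rw [hYs n]
        have h1 : (1 - η) * min (sd * X n + u * Y n) (M * (s2 * X n + u * Y n))
            ≤ (1 - η) * (sd * X n + u * Y n) :=
          mul_le_mul_of_nonneg_left (min_le_left _ _) h1η.le
        have h0 : (0:ℝ) < u * Y n := mul_pos hupos hy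
        have h0' : s2 * X n ≤ sd * X n := mul_le_mul_of_nonneg_right hssd hx.le
        have h2 : η * (s2 * X n) ≤ η * (sd * X n + u * Y n) :=
          mul_le_mul_of_nonneg_left (by linarith only [h0, h0']) hη0.le
        linarith only [hgapbase, h1, h2]
      -- power bounds
      have hOne : ∀ e : ℝ, 0 ≤ e → a n ^ e ≤ θ ^ (e * X n) := by
        intro e he
        calc a n ^ e ≤ (θ ^ X n) ^ e := Real.rpow_le_rpow (h0a n) hA he
          _ = θ ^ (X n * e) := (Real.rpow_mul hθpos.le _ _).symm
          _ = θ ^ (e * X n) := by rw [mul_comm]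
      have hOneB : b n ^ (u:ℝ) ≤ θ ^ (u * Y n) := by
        calc b n ^ (u:ℝ) ≤ (θ ^ Y n) ^ (u:ℝ) := Real.rpow_le_rpow (hb0 n) hB hupos.le
          _ = θ ^ (Y n * u) := (Real.rpow_mul hθpos.le _ _).symm
          _ = θ ^ (u * Y n) := by rw [mul_comm]
      have htermB1 : a n ^ (sd + u * M) ≤ θ ^ (sd * X n + u * Y n) := by
        calc a n ^ (sd + u * M) ≤ θ ^ ((sd + u * M) * X n) :=
            hOne _ (by linarith)
          _ ≤ θ ^ (sd * X n + u * Y n) := by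
            apply Real.rpow_le_rpow_of_exponent_ge hθpos hθ1.le
            have h := mul_le_mul_of_nonneg_left hyM hupos.le
            linarith only [h]
      have htermB2 : a n ^ (sd:ℝ) * b n ^ (u:ℝ) ≤ θ ^ (sd * X n + u * Y n) := by
        calc a n ^ (sd:ℝ) * b n ^ (u:ℝ) ≤ θ ^ (sd * X n) * θ ^ (u * Y n) :=
            mul_le_mul (hOne _ hsd.le) hOneB (Real.rpow_nonneg (hb0 n) _)
              (Real.rpow_pos_of_pos hθpos _).le
          _ = θ ^ (sd * X n + u * Y n) := (Real.rpow_add hθpos _ _).symm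
      have htermA1 : a n ^ (s2 + u * M) ≤ θ ^ (s2 * X n + u * Y n) := by
        calc a n ^ (s2 + u * M) ≤ θ ^ ((s2 + u * M) * X n) :=
            hOne _ (by linarith)
          _ ≤ θ ^ (s2 * X n + u * Y n) := by
            apply Real.rpow_le_rpow_of_exponent_ge hθpos hθ1.le
            have h := mul_le_mul_of_nonneg_left hyM hupos.le
            linarith only [h]
      have htermA2 : b n ^ (u:ℝ) * a n ^ (s2:ℝ) ≤ θ ^ (s2 * X n + u * Y n) := by
        calc b n ^ (u:ℝ) * a n ^ (s2:ℝ) ≤ θ ^ (u * Y n) * θ ^ (s2 * X n) :=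
            mul_le_mul hOneB (hOne _ hs2.le) (Real.rpow_nonneg (h0a n) _)
              (Real.rpow_pos_of_pos hθpos _).le
          _ = θ ^ (s2 * X n + u * Y n) := by
            rw [← Real.rpow_add hθpos]; ring_nf
      have hc1n : (0:ℝ) ≤ C₁ ^ n := pow_nonneg hC₁pos.le n
      have habsorb : ∀ Z S : ℝ, Z + γ * ρ2 ^ n ≤ S → 2 * C₁ ^ n * θ ^ S ≤ θ ^ Z := by
        intro Z S hZS
        have h1 : θ ^ S ≤ θ ^ (Z + γ * ρ2 ^ n) :=
          Real.rpow_le_rpow_of_exponent_ge hθpos hθ1.le hZS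
        rw [Real.rpow_add hθpos] at h1
        calc 2 * C₁ ^ n * θ ^ S ≤ 2 * C₁ ^ n * (θ ^ Z * θ ^ (γ * ρ2 ^ n)) :=
            mul_le_mul_of_nonneg_left h1
              (mul_nonneg (by norm_num) (pow_nonneg hC₁pos.le n))
          _ = (2 * C₁ ^ n * θ ^ (γ * ρ2 ^ n)) * θ ^ Z := by ring
          _ ≤ 1 * θ ^ Z :=
            mul_le_mul_of_nonneg_right (hKA n) (Real.rpow_nonneg hθpos.le _)
          _ = θ ^ Z := one_mul _
      constructor
      · have hbA := hrA n
        rw [heA] at hbA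
        have h1 : C₁ ^ n * a n ^ (s2 + u * M) ≤ C₁ ^ n * θ ^ (s2 * X n + u * Y n) :=
          mul_le_mul_of_nonneg_left htermA1 hc1n
        have h2 : C₁ ^ n * b n ^ (u:ℝ) * a n ^ (s2:ℝ) ≤ C₁ ^ n * θ ^ (s2 * X n + u * Y n) := by
          rw [mul_assoc]; exact mul_le_mul_of_nonneg_left htermA2 hc1n
        have h3 : a (n + 1) ≤ 2 * C₁ ^ n * θ ^ (s2 * X n + u * Y n) := by linarith
        exact h3.trans (habsorb _ _ hgapX)
      · have hbB := hrB n
        rw [heB] at hbB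
        have h1 : C₁ ^ n * a n ^ (sd + u * M) ≤ C₁ ^ n * θ ^ (sd * X n + u * Y n) :=
          mul_le_mul_of_nonneg_left htermB1 hc1n
        have h2 : C₁ ^ n * a n ^ (sd:ℝ) * b n ^ (u:ℝ) ≤ C₁ ^ n * θ ^ (sd * X n + u * Y n) := by
          rw [mul_assoc]; exact mul_le_mul_of_nonneg_left htermB2 hc1n
        have h3 : b (n + 1) ≤ 2 * C₁ ^ n * θ ^ (sd * X n + u * Y n) := by linarith
        exact h3.trans (habsorb _ _ hgapY)
  -- limits
  have hXtend : Tendsto X atTop atTop := by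
    have hc : (0:ℝ) < (1 + κ) / (1 + κ * M) := div_pos hκ1 hκM
    have hg : Tendsto (fun n : ℕ => (1 + κ) / (1 + κ * M) * ρ2 ^ n) atTop atTop :=
      (tendsto_pow_atTop_atTop_of_one_lt hρ2).const_mul_atTop hc
    exact tendsto_atTop_mono hXlb hg
  have hθX : Tendsto (fun n => θ ^ (X n)) atTop (nhds 0) := by
    have hlog : Real.log θ < 0 := Real.log_neg hθpos hθ1
    have h1 : Tendsto (fun n => Real.log θ * X n) atTop atBot :=
      Tendsto.const_mul_atTop_of_neg hlog hXtend
    have heq : (fun n : ℕ => θ ^ (X n)) = fun n => Real.exp (Real.log θ * X n) := by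
      funext n; rw [Real.rpow_def_of_pos hθpos]
    rw [heq]
    exact Real.tendsto_exp_atBot.comp h1
  have hAtend : Tendsto a atTop (nhds 0) :=
    squeeze_zero h0a (fun n => (hAB n).1) hθX
  exact ⟨hAtend, squeeze_zero hb0 hba hAtend⟩
end

section
/- For s ∈ (0,1), define f(x₁,x₂,y) = x₁² + x₂² + y(y-1) - (1/4)|y-x₁+x₂|^{s-1}(x₁+y-1) - (1/4)|y+x₁-x₂|^{s-1}(x₂+y-1) - (1/4)|y+x₁+x₂|^{s-1}(-x₁-x₂+2(y-1)) near (0,0,1). Then f and its gradient vanish at (0,0,1), and the Hessian there has entries f_{x₁x₁} = f_{x₂x₂} = 1+s, f_{yy} = 4-2s, f_{x₁x₂} = 0, f_{x₁y} = f_{x₂y} = -(s-1)/2, which is positive definite; hence (0,0,1) is a strict local minimum of f. -/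
/-!
Near `(0, 0, 1)` every summand of `f` is `φ (c + ℓ) * m`, with `ℓ`, `m` linear in the displacement
and `φ` the identity or `t ↦ |t| ^ (s - 1)` (for the latter `c = 1`, and the absolute value is
harmless). Since `m` vanishes at the centre, the mixed second derivative of such a product there
only involves `φ' c`, so the Hessian is computed term by term. For the strict minimum, write
`t ^ (s - 1) = 1 + (s - 1) (t - 1) + O((t - 1)²)`: the linear terms cancel, the quadratic ones form
half the Hessian form, which is at least `|d|² / 4` for `s ∈ [0, 1]`, and the remainder is
`O(|d|³)`.
-/

open Filter Topology Matrix Set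

def HasMixedDerivAtZero (g : ℝ → ℝ → ℝ) (d h : ℝ) : Prop :=
  ∃ D : ℝ → ℝ, (∀ᶠ a in 𝓝 0, HasDerivAt (g a) (D a) 0) ∧ D 0 = d ∧ HasDerivAt D h 0

namespace HasMixedDerivAtZero

variable {g g' : ℝ → ℝ → ℝ} {d d' h h' : ℝ}

theorem deriv_eq (hg : HasMixedDerivAtZero g d h) : deriv (g 0) 0 = d := by
  obtain ⟨D, hD, rfl, -⟩ := hg
  exact hD.self_of_nhds.deriv

theorem deriv_deriv_eq (hg : HasMixedDerivAtZero g d h) :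
    deriv (fun a => deriv (g a) 0) 0 = h := by
  obtain ⟨D, hD, -, hDh⟩ := hg
  have hDeq : (fun a => deriv (g a) 0) =ᶠ[𝓝 0] D := hD.mono fun a ha => ha.deriv
  rw [hDeq.deriv_eq, hDh.deriv]

theorem add (hg : HasMixedDerivAtZero g d h) (hg' : HasMixedDerivAtZero g' d' h') :
    HasMixedDerivAtZero (fun a b => g a b + g' a b) (d + d') (h + h') := by
  obtain ⟨D, hD, rfl, hDh⟩ := hg
  obtain ⟨D', hD', rfl, hDh'⟩ := hg'
  exact ⟨fun a => D a + D' a, (hD.and hD').mono fun a ha => ha.1.add ha.2, rfl, hDh.add hDh'⟩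

theorem const_mul (c : ℝ) (hg : HasMixedDerivAtZero g d h) :
    HasMixedDerivAtZero (fun a b => c * g a b) (c * d) (c * h) := by
  obtain ⟨D, hD, rfl, hDh⟩ := hg
  exact ⟨fun a => c * D a, hD.mono fun a ha => ha.const_mul c, rfl, hDh.const_mul c⟩

end HasMixedDerivAtZero

theorem hasDerivAt_const_add_mul (c k x : ℝ) : HasDerivAt (fun b => c + k * b) k x := by
  simpa using ((hasDerivAt_id x).const_mul k).const_add c

theorem hasMixedDerivAtZero_comp_affine_mul {φ φ' : ℝ → ℝ} {c : ℝ}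
    (hφ : ∀ᶠ t in 𝓝 c, HasDerivAt φ (φ' t) t) (hφ' : DifferentiableAt ℝ φ' c)
    (α α' μ μ' : ℝ) :
    HasMixedDerivAtZero (fun a b => φ (c + α * a + α' * b) * (μ * a + μ' * b))
      (φ c * μ') (φ' c * (α * μ' + α' * μ)) := by
  have hline := hasDerivAt_const_add_mul c α 0
  have hlim : Tendsto (fun a => c + α * a) (𝓝 0) (𝓝 c) := by
    simpa using hline.continuousAt.tendsto
  refine ⟨fun a => α' * φ' (c + α * a) * (μ * a) + φ (c + α * a) * μ', ?_, by simp, ?_⟩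
  · filter_upwards [hlim.eventually hφ] with a ha
    refine ((ha.comp_of_eq 0 (hasDerivAt_const_add_mul _ α' 0) (by simp)).mul
      (hasDerivAt_const_add_mul (μ * a) μ' 0)).congr_deriv ?_
    simp only [mul_zero, add_zero, Function.comp_apply]
    ring
  · have h₁ := ((hφ'.hasDerivAt.comp_of_eq 0 hline (by simp)).const_mul α').mul
      ((hasDerivAt_id (0 : ℝ)).const_mul μ)
    have h₂ := (hφ.self_of_nhds.comp_of_eq 0 hline (by simp)).mul_const μ'
    refine (h₁.add h₂).congr_deriv ?_
    simp only [id_eq, mul_zero, Function.comp_apply, add_zero, mul_one, zero_add]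
    ring

theorem hasDerivAt_abs_rpow_of_pos {q t : ℝ} (ht : 0 < t) :
    HasDerivAt (fun t => |t| ^ q) (q * t ^ (q - 1)) t := by
  refine (Real.hasDerivAt_rpow_const (Or.inl ht.ne')).congr_of_eventuallyEq ?_
  filter_upwards [Ioi_mem_nhds ht] with u hu
  rw [abs_of_pos hu]

theorem deriv_eq_deriv_comp_const_add (g : ℝ → ℝ) (x : ℝ) :
    deriv g x = deriv (fun b => g (x + b)) 0 := by
  simpa using (deriv_comp_const_add g x 0).symm

theorem deriv_deriv_eq_deriv_deriv_comp_const_add (g : ℝ → ℝ) (x : ℝ) :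
    deriv (deriv g) x = deriv (fun a => deriv (fun b => g (x + a + b)) 0) 0 := by
  simp_rw [← deriv_eq_deriv_comp_const_add]

noncomputable def rpowRemainder (q t : ℝ) : ℝ := t ^ q - 1 - q * (t - 1)

theorem abs_log_sub_sub_one_le {t : ℝ} (ht : |t - 1| ≤ 1 / 2) :
    |Real.log t - (t - 1)| ≤ 2 * (t - 1) ^ 2 := by
  have hx : |1 - t| < 1 := by rw [abs_sub_comm]; linarith
  have h := Real.abs_log_sub_add_sum_range_le hx 1
  simp only [Finset.range_one, Finset.sum_singleton, zero_add, pow_one, Nat.cast_zero,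
    div_one, sub_sub_cancel] at h
  rw [abs_sub_comm 1 t] at h
  calc |Real.log t - (t - 1)| = |1 - t + Real.log t| := by ring_nf
    _ ≤ |t - 1| ^ 2 / (1 - |t - 1|) := h
    _ ≤ 2 * (t - 1) ^ 2 := by
      rw [div_le_iff₀ (by linarith), sq_abs]
      nlinarith [sq_nonneg (t - 1)]

theorem abs_rpowRemainder_le {q t : ℝ} (hq : |q| ≤ 1) (ht : |t - 1| ≤ 1 / 2) :
    |rpowRemainder q t| ≤ 6 * (t - 1) ^ 2 := by
  have htpos : 0 < t := by linarith [(abs_le.mp ht).1]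
  set L := Real.log t
  have hL := abs_log_sub_sub_one_le ht
  have hsq : 2 * (t - 1) ^ 2 ≤ |t - 1| := by
    rw [← sq_abs]; nlinarith [abs_nonneg (t - 1)]
  have hLabs : |L| ≤ 2 * |t - 1| := by
    calc |L| = |(L - (t - 1)) + (t - 1)| := by ring_nf
      _ ≤ |L - (t - 1)| + |t - 1| := abs_add_le _ _
      _ ≤ 2 * |t - 1| := by linarith
  have hqL : |q * L| ≤ 2 * |t - 1| := by
    rw [abs_mul]
    nlinarith [abs_nonneg q, abs_nonneg L]
  have hexp := Real.abs_exp_sub_one_sub_id_le (hqL.trans (by linarith))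
  have hqL2 : (q * L) ^ 2 ≤ 4 * (t - 1) ^ 2 := by
    rw [← sq_abs, show 4 * (t - 1) ^ 2 = (2 * |t - 1|) ^ 2 by rw [mul_pow, sq_abs]; norm_num]
    exact pow_le_pow_left₀ (abs_nonneg _) hqL 2
  have hdecomp : rpowRemainder q t = (Real.exp (q * L) - 1 - q * L) + q * (L - (t - 1)) := by
    rw [rpowRemainder, Real.rpow_def_of_pos htpos, mul_comm (Real.log t)]
    ring
  calc |rpowRemainder q t| ≤ |Real.exp (q * L) - 1 - q * L| + |q| * |L - (t - 1)| := by
        rw [hdecomp, ← abs_mul]; exact abs_add_le _ _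
    _ ≤ 4 * (t - 1) ^ 2 + 1 * (2 * (t - 1) ^ 2) := by
        gcongr
        exact hexp.trans hqL2
    _ = 6 * (t - 1) ^ 2 := by ring

noncomputable def potential (s x₁ x₂ y : ℝ) : ℝ :=
  x₁ ^ 2 + x₂ ^ 2 + y * (y - 1)
    - (1 / 4) * |y - x₁ + x₂| ^ (s - 1) * (x₁ + y - 1)
    - (1 / 4) * |y + x₁ - x₂| ^ (s - 1) * (x₂ + y - 1)
    - (1 / 4) * |y + x₁ + x₂| ^ (s - 1) * (-x₁ - x₂ + 2 * (y - 1))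

noncomputable def hessian (s : ℝ) : Matrix (Fin 3) (Fin 3) ℝ :=
  !![1 + s, 0, -(s - 1) / 2; 0, 1 + s, -(s - 1) / 2; -(s - 1) / 2, -(s - 1) / 2, 4 - 2 * s]

theorem dotProduct_hessian_mulVec (s : ℝ) (x y : Fin 3 → ℝ) :
    x ⬝ᵥ hessian s *ᵥ y = (1 + s) * (x 0 * y 0 + x 1 * y 1) + (4 - 2 * s) * (x 2 * y 2)
      + (1 - s) / 2 * ((x 0 + x 1) * y 2 + x 2 * (y 0 + y 1)) := by
  simp only [dotProduct, mulVec, hessian, of_apply, cons_val', cons_val_fin_one, Fin.sum_univ_three,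
    cons_val_zero, cons_val_one, cons_val]
  ring

theorem hessian_quadForm (s : ℝ) (x : Fin 3 → ℝ) :
    x ⬝ᵥ hessian s *ᵥ x =
      (1 + s) * (x 0 ^ 2 + x 1 ^ 2) + (4 - 2 * s) * x 2 ^ 2 + (1 - s) * (x 0 + x 1) * x 2 := by
  rw [dotProduct_hessian_mulVec]
  ring

theorem hasMixedDerivAtZero_potential (s : ℝ) (e e' : Fin 3 → ℝ) :
    HasMixedDerivAtZero
      (fun a b => potential s (a * e 0 + b * e' 0) (a * e 1 + b * e' 1) (1 + a * e 2 + b * e' 2))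
      0 (e ⬝ᵥ hessian s *ᵥ e') := by
  have hid (c α α' μ μ' : ℝ) :=
    hasMixedDerivAtZero_comp_affine_mul (φ := fun t => t) (φ' := fun _ => 1) (c := c)
      (.of_forall hasDerivAt_id) (differentiableAt_const _) α α' μ μ'
  have hpow (α α' μ μ' : ℝ) :=
    (hasMixedDerivAtZero_comp_affine_mul (φ := fun t => |t| ^ (s - 1))
      (φ' := fun t => (s - 1) * t ^ (s - 1 - 1)) (c := 1)
      (by filter_upwards [Ioi_mem_nhds one_pos] with t ht using hasDerivAt_abs_rpow_of_pos ht)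
      ((Real.hasDerivAt_rpow_const (Or.inl one_ne_zero)).differentiableAt.const_mul _)
      α α' μ μ').const_mul (-(1 / 4))
  have hsum := ((((((hid 0 (e 0) (e' 0) (e 0) (e' 0)).add (hid 0 (e 1) (e' 1) (e 1) (e' 1))).add
    (hid 1 (e 2) (e' 2) (e 2) (e' 2))).add
    (hpow (e 2 - e 0 + e 1) (e' 2 - e' 0 + e' 1) (e 0 + e 2) (e' 0 + e' 2))).add
    (hpow (e 2 + e 0 - e 1) (e' 2 + e' 0 - e' 1) (e 1 + e 2) (e' 1 + e' 2))).add
    (hpow (e 2 + e 0 + e 1) (e' 2 + e' 0 + e' 1) (-e 0 - e 1 + 2 * e 2)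
      (-e' 0 - e' 1 + 2 * e' 2)))
  convert hsum using 1
  · funext a b
    simp only [potential]
    ring_nf
  · simp only [abs_one, Real.one_rpow]
    ring
  · rw [dotProduct_hessian_mulVec]
    simp only [Real.one_rpow]
    ring

theorem half_dotProduct_self_le_hessian {s : ℝ} (hs : s ∈ Icc 0 1) (x : Fin 3 → ℝ) :
    x ⬝ᵥ x / 2 ≤ x ⬝ᵥ hessian s *ᵥ x := by
  obtain ⟨hs₀, hs₁⟩ := hs
  rw [hessian_quadForm]
  simp only [dotProduct, Fin.sum_univ_three]
  nlinarith [mul_nonneg (sub_nonneg.2 hs₁) (sq_nonneg (x 0 + x 2)),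
    mul_nonneg (sub_nonneg.2 hs₁) (sq_nonneg (x 1 + x 2)),
    mul_nonneg hs₀ (sq_nonneg (x 0)), mul_nonneg hs₀ (sq_nonneg (x 1)),
    sq_nonneg (x 0), sq_nonneg (x 1), sq_nonneg (x 2)]

theorem posDef_hessian {s : ℝ} (hs : s ∈ Icc 0 1) : (hessian s).PosDef := by
  rw [Matrix.posDef_iff_dotProduct_mulVec]
  refine ⟨?_, fun x hx => ?_⟩
  · ext i j
    fin_cases i <;> fin_cases j <;> simp [hessian]
  · have hpos := dotProduct_star_self_pos_iff.mpr hx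
    rw [star_trivial] at hpos ⊢
    linarith [half_dotProduct_self_le_hessian hs x]

theorem potential_one_add (s a b c : ℝ) (hu : 0 < 1 + (c - a + b)) (hv : 0 < 1 + (c + a - b))
    (hw : 0 < 1 + (c + a + b)) :
    potential s a b (1 + c) = ![a, b, c] ⬝ᵥ hessian s *ᵥ ![a, b, c] / 2
      - (rpowRemainder (s - 1) (1 + (c - a + b)) * (a + c)
        + rpowRemainder (s - 1) (1 + (c + a - b)) * (b + c)
        + rpowRemainder (s - 1) (1 + (c + a + b)) * (-a - b + 2 * c)) / 4 := by
  rw [hessian_quadForm, potential]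
  simp only [rpowRemainder, Matrix.cons_val_zero, Matrix.cons_val_one, Matrix.cons_val_two,
    Matrix.head_cons, Matrix.tail_cons]
  rw [show 1 + c - a + b = 1 + (c - a + b) by ring, show 1 + c + a - b = 1 + (c + a - b) by ring,
    show 1 + c + a + b = 1 + (c + a + b) by ring, abs_of_pos hu, abs_of_pos hv, abs_of_pos hw]
  ring

-- For `|d| ≤ r` the remainder is at most `36 r |d|²` and the quadratic part at least `|d|² / 4`,
-- so any radius below `1 / 144` works.
theorem potential_lt_potential {s : ℝ} (hs : s ∈ Icc 0 1) {x₁ x₂ y : ℝ}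
    (h₀ : 0 < x₁ ^ 2 + x₂ ^ 2 + (y - 1) ^ 2) (hr : x₁ ^ 2 + x₂ ^ 2 + (y - 1) ^ 2 ≤ (1 / 200) ^ 2) :
    potential s 0 0 1 < potential s x₁ x₂ y := by
  obtain ⟨c, rfl⟩ : ∃ c, y = 1 + c := ⟨y - 1, by ring⟩
  rw [add_sub_cancel_left] at h₀ hr
  set N := x₁ ^ 2 + x₂ ^ 2 + c ^ 2
  have hsmall {z : ℝ} (hz : z ^ 2 ≤ N) : |z| ≤ 1 / 200 :=
    abs_le_of_sq_le_sq (hz.trans hr) (by norm_num)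
  have h₁ := abs_le.mp (hsmall (z := x₁) (by nlinarith))
  have h₂ := abs_le.mp (hsmall (z := x₂) (by nlinarith))
  have h₃ := abs_le.mp (hsmall (z := c) (by nlinarith))
  have hq : |s - 1| ≤ 1 := abs_le.mpr ⟨by linarith [hs.1], by linarith [hs.2]⟩
  have hterm {ℓ m ρ : ℝ} (hℓ : |ℓ| ≤ 1 / 2) (hℓN : ℓ ^ 2 ≤ 3 * N) (hm : |m| ≤ ρ) :
      |rpowRemainder (s - 1) (1 + ℓ) * m| ≤ 18 * N * ρ := by
    have hR := abs_rpowRemainder_le hq (t := 1 + ℓ) (by rwa [add_sub_cancel_left])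
    rw [add_sub_cancel_left] at hR
    rw [abs_mul]
    exact mul_le_mul (by linarith) hm (abs_nonneg _) (by positivity)
  have hu := hterm (ℓ := c - x₁ + x₂) (m := x₁ + c) (ρ := 2 / 200)
    (abs_le.mpr ⟨by linarith, by linarith⟩)
    (by nlinarith [sq_nonneg (x₁ + x₂), sq_nonneg (x₁ + c), sq_nonneg (x₂ - c)])
    (abs_le.mpr ⟨by linarith, by linarith⟩)
  have hv := hterm (ℓ := c + x₁ - x₂) (m := x₂ + c) (ρ := 2 / 200)
    (abs_le.mpr ⟨by linarith, by linarith⟩)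
    (by nlinarith [sq_nonneg (x₁ + x₂), sq_nonneg (x₂ + c), sq_nonneg (x₁ - c)])
    (abs_le.mpr ⟨by linarith, by linarith⟩)
  have hw := hterm (ℓ := c + x₁ + x₂) (m := -x₁ - x₂ + 2 * c) (ρ := 4 / 200)
    (abs_le.mpr ⟨by linarith, by linarith⟩)
    (by nlinarith [sq_nonneg (x₁ - x₂), sq_nonneg (x₂ - c), sq_nonneg (x₁ - c)])
    (abs_le.mpr ⟨by linarith, by linarith⟩)
  rw [abs_le] at hu hv hw
  have hQ := half_dotProduct_self_le_hessian hs ![x₁, x₂, c]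
  have hN : ![x₁, x₂, c] ⬝ᵥ ![x₁, x₂, c] = N := by
    simp [dotProduct, Fin.sum_univ_three, N, sq]
  rw [hN] at hQ
  have h001 : potential s 0 0 1 = 0 := by norm_num [potential]
  rw [h001, potential_one_add s x₁ x₂ c (by linarith) (by linarith) (by linarith)]
  linarith

theorem stmt_10 (s : ℝ) (hs : s ∈ Set.Ioo (0 : ℝ) 1) (f : ℝ → ℝ → ℝ → ℝ)
    (hf : ∀ x₁ x₂ y : ℝ, f x₁ x₂ y = x₁ ^ 2 + x₂ ^ 2 + y * (y - 1)
      - (1 / 4) * |y - x₁ + x₂| ^ (s - 1) * (x₁ + y - 1)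
      - (1 / 4) * |y + x₁ - x₂| ^ (s - 1) * (x₂ + y - 1)
      - (1 / 4) * |y + x₁ + x₂| ^ (s - 1) * (-x₁ - x₂ + 2 * (y - 1))) :
    f 0 0 1 = 0 ∧
    deriv (fun x => f x 0 1) 0 = 0 ∧
    deriv (fun x => f 0 x 1) 0 = 0 ∧
    deriv (fun y => f 0 0 y) 1 = 0 ∧
    deriv (fun x => deriv (fun x' => f x' 0 1) x) 0 = 1 + s ∧
    deriv (fun x => deriv (fun x' => f 0 x' 1) x) 0 = 1 + s ∧
    deriv (fun y => deriv (fun y' => f 0 0 y') y) 1 = 4 - 2 * s ∧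
    deriv (fun x₁ => deriv (fun x₂ => f x₁ x₂ 1) 0) 0 = 0 ∧
    deriv (fun x₁ => deriv (fun y => f x₁ 0 y) 1) 0 = -(s - 1) / 2 ∧
    deriv (fun x₂ => deriv (fun y => f 0 x₂ y) 1) 0 = -(s - 1) / 2 ∧
    Matrix.PosDef
      !![1 + s, 0, -(s - 1) / 2; 0, 1 + s, -(s - 1) / 2;
         -(s - 1) / 2, -(s - 1) / 2, 4 - 2 * s] ∧
    ∃ r : ℝ, 0 < r ∧ ∀ x₁ x₂ y : ℝ,
      0 < x₁ ^ 2 + x₂ ^ 2 + (y - 1) ^ 2 →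
      x₁ ^ 2 + x₂ ^ 2 + (y - 1) ^ 2 ≤ r ^ 2 → f 0 0 1 < f x₁ x₂ y := by
  obtain rfl : f = potential s := funext fun x₁ => funext fun x₂ => funext fun y => hf x₁ x₂ y
  have hs' := Ioo_subset_Icc_self hs
  have H := hasMixedDerivAtZero_potential s
  refine ⟨by norm_num [potential], ?_, ?_, ?_, ?_, ?_, ?_, ?_, ?_, ?_, posDef_hessian hs',
    1 / 200, by norm_num, fun x₁ x₂ y h₀ hr => potential_lt_potential hs' h₀ hr⟩
  · simpa using (H 0 ![1, 0, 0]).deriv_eq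
  · simpa using (H 0 ![0, 1, 0]).deriv_eq
  · rw [deriv_eq_deriv_comp_const_add]
    simpa using (H 0 ![0, 0, 1]).deriv_eq
  · rw [deriv_deriv_eq_deriv_deriv_comp_const_add]
    simpa [hessian, vecHead, vecTail] using (H ![1, 0, 0] ![1, 0, 0]).deriv_deriv_eq
  · rw [deriv_deriv_eq_deriv_deriv_comp_const_add]
    simpa [hessian, vecHead, vecTail] using (H ![0, 1, 0] ![0, 1, 0]).deriv_deriv_eq
  · rw [deriv_deriv_eq_deriv_deriv_comp_const_add]
    simpa [hessian, vecHead, vecTail] using (H ![0, 0, 1] ![0, 0, 1]).deriv_deriv_eq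
  · simpa [hessian, vecHead, vecTail] using (H ![1, 0, 0] ![0, 1, 0]).deriv_deriv_eq
  · simp_rw [deriv_eq_deriv_comp_const_add _ 1]
    simpa [hessian, vecHead, vecTail] using (H ![1, 0, 0] ![0, 0, 1]).deriv_deriv_eq
  · simp_rw [deriv_eq_deriv_comp_const_add _ 1]
    simpa [hessian, vecHead, vecTail] using (H ![0, 1, 0] ![0, 0, 1]).deriv_deriv_eq
end

section
/- Let {A_k(t)}_{k≥0} be differentiable nonnegative functions on [0,∞) satisfying (d/dt)A_k + C_0 A_k ≤ C_1^{n_k} + C_1^k A_{k-1}^{2 + C_1/n_k} for all k ≥ 1, where n_k = 2^k(a+1) - a with a > -1 and C_0, C_1 > 0. If sup_k A_k(0)^{1/n_k} ≤ M and sup_{t≥0} A_0(t) ≤ M^{n_0}, then there is a constant C depending only on C_0, C_1, M, a such that A_k(t)^{1/n_k} ≤ C for all k ≥ 0 and all t ≥ 0. -/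
open Real Finset

/-!
Write the bound in the form `A k ≤ exp (n k * e k)`. The comparison principle for
`f' + C₀ f ≤ C₀ K` propagates it from `k` to `k + 1` as soon as
`n (k+1) * e (k+1) ≥ (n (k+1) + c) * e k + (k + 1) * L`, where `c = |a| + C₁` absorbs the
superquadratic exponent (`n k * (2 + C₁ / n (k+1)) ≤ n (k+1) + c` because `n (k+1) = 2 n k + a`)
and `L` absorbs `log C₁`, `log (C₀ / 2)` and `log M`. Taking equality defines `moserExponent`.
Since `n k` grows like `2 ^ k`, both `∑ c / n (k+1)` and `∑ (k+1) L / n (k+1)` converge, so the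
discrete Grönwall inequality bounds `e k` uniformly, and `A k ^ (1 / n k) ≤ exp (e k)`.
-/

lemma le_of_deriv_add_mul_le {f : ℝ → ℝ} {c K : ℝ} (hf : Differentiable ℝ f)
    (hbound : ∀ t, 0 ≤ t → deriv f t + c * f t ≤ c * K) (h0 : f 0 ≤ K) {t : ℝ} (ht : 0 ≤ t) :
    f t ≤ K := by
  have := le_gronwallBound_of_liminf_deriv_right_le (f := fun s => f s - K) (f' := deriv f)
    (K := -c) (ε := 0) (hf.continuous.sub continuous_const).continuousOn
    (fun x _ r hr => ((hf x).hasDerivAt.sub_const K).hasDerivWithinAt.liminf_right_slope_le hr)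
    (sub_nonpos.2 h0) (fun x hx => by linarith [hbound x hx.1]) t ⟨ht, le_rfl⟩
  rw [gronwallBound_ε0] at this
  nlinarith [exp_pos (-c * (t - 0))]

def moserIndex (a : ℝ) (k : ℕ) : ℝ := 2 ^ k * (a + 1) - a

section moserIndex

variable {a : ℝ}

lemma moserIndex_succ (k : ℕ) : moserIndex a (k + 1) = 2 * moserIndex a k + a := by
  simp only [moserIndex, pow_succ]; ring

lemma min_mul_two_pow_le_moserIndex (k : ℕ) : min 1 (a + 1) * 2 ^ k ≤ moserIndex a k := by
  have h1 : (1 : ℝ) ≤ 2 ^ k := one_le_pow₀ one_le_two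
  unfold moserIndex
  rcases le_total a 0 with h | h
  · nlinarith [min_le_right 1 (a + 1)]
  · nlinarith [min_le_left 1 (a + 1)]

lemma one_le_moserIndex (ha : -1 < a) (k : ℕ) : 1 ≤ moserIndex a k := by
  have h1 : (1 : ℝ) ≤ 2 ^ k := one_le_pow₀ one_le_two
  unfold moserIndex; nlinarith

lemma moserIndex_pos (ha : -1 < a) (k : ℕ) : 0 < moserIndex a k :=
  one_pos.trans_le (one_le_moserIndex ha k)

lemma moserIndex_le_succ (ha : -1 < a) (k : ℕ) : moserIndex a k ≤ moserIndex a (k + 1) := by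
  rw [moserIndex_succ]; linarith [one_le_moserIndex ha k]

lemma summable_succ_div_moserIndex_succ (ha : -1 < a) :
    Summable fun k : ℕ => ((k : ℝ) + 1) / moserIndex a (k + 1) := by
  have hm : 0 < min 1 (a + 1) := lt_min one_pos (by linarith)
  have hgeom : Summable fun k : ℕ => ((k + 1 : ℕ) : ℝ) ^ 1 * (1 / 2 : ℝ) ^ (k + 1) :=
    (summable_nat_add_iff 1).2 (summable_pow_mul_geometric_of_norm_lt_one (R := ℝ) 1 (by norm_num))
  refine (hgeom.mul_left (min 1 (a + 1))⁻¹).of_nonneg_of_le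
    (fun k => div_nonneg (by positivity) (moserIndex_pos ha _).le) fun k => ?_
  calc ((k : ℝ) + 1) / moserIndex a (k + 1) ≤ ((k : ℝ) + 1) / (min 1 (a + 1) * 2 ^ (k + 1)) :=
        div_le_div_of_nonneg_left (by positivity) (by positivity) (min_mul_two_pow_le_moserIndex _)
    _ = (min 1 (a + 1))⁻¹ * (((k + 1 : ℕ) : ℝ) ^ 1 * (1 / 2 : ℝ) ^ (k + 1)) := by
        rw [one_div, inv_pow]; push_cast; field_simp

lemma moserIndex_mul_two_add_div_le {C : ℝ} (ha : -1 < a) (hC : 0 ≤ C) (k : ℕ) :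
    moserIndex a k * (2 + C / moserIndex a (k + 1)) ≤ moserIndex a (k + 1) + (|a| + C) := by
  have hpos := moserIndex_pos ha (k + 1)
  have hfrac : moserIndex a k * (C / moserIndex a (k + 1)) ≤ C := by
    rw [mul_div_left_comm]
    exact mul_le_of_le_one_right hC ((div_le_one hpos).2 (moserIndex_le_succ ha k))
  rw [moserIndex_succ] at hfrac ⊢
  linarith [neg_abs_le a]

end moserIndex

noncomputable def moserExponent (n : ℕ → ℝ) (c L : ℝ) : ℕ → ℝ
  | 0 => L
  | k + 1 => (1 + c / n (k + 1)) * moserExponent n c L k + (k + 1) * L / n (k + 1)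

section moserExponent

variable {n : ℕ → ℝ} {c L : ℝ}

lemma le_moserExponent (hn : ∀ k, 0 < n k) (hc : 0 ≤ c) (hL : 0 ≤ L) (k : ℕ) :
    L ≤ moserExponent n c L k := by
  induction k with
  | zero => rfl
  | succ k ih =>
    have hn' := (hn (k + 1)).le
    have : 0 ≤ c / n (k + 1) * moserExponent n c L k :=
      mul_nonneg (div_nonneg hc hn') (hL.trans ih)
    have : 0 ≤ (k + 1) * L / n (k + 1) := by positivity
    simp only [moserExponent]
    linarith

lemma mul_moserExponent_succ {k : ℕ} (hn : n (k + 1) ≠ 0) :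
    n (k + 1) * moserExponent n c L (k + 1) =
      (n (k + 1) + c) * moserExponent n c L k + (k + 1) * L := by
  simp only [moserExponent]
  field_simp

lemma moserExponent_le_tsum (hn : ∀ k, 0 < n k) (hc : 0 ≤ c) (hL : 0 ≤ L)
    (hs : Summable fun k : ℕ => ((k : ℝ) + 1) / n (k + 1)) (k : ℕ) :
    moserExponent n c L k ≤
      (L + ∑' j : ℕ, (j + 1) * L / n (j + 1)) * exp (∑' j : ℕ, c / n (j + 1)) := by
  have hu : ∀ j : ℕ, 0 ≤ c / n (j + 1) := fun j => div_nonneg hc (hn _).le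
  have hv : ∀ j : ℕ, 0 ≤ (j + 1) * L / n (j + 1) := fun j => div_nonneg (by positivity) (hn _).le
  have hus : Summable fun j : ℕ => c / n (j + 1) :=
    (hs.mul_left c).of_nonneg_of_le hu fun j => by
      rw [← mul_div_assoc]
      exact div_le_div_of_nonneg_right
        (le_mul_of_one_le_right hc (le_add_of_nonneg_left j.cast_nonneg)) (hn _).le
  have hvs : Summable fun j : ℕ => (j + 1) * L / n (j + 1) :=
    (hs.mul_left L).congr fun j => by ring
  have hgronwall := discrete_gronwall (u := moserExponent n c L) (n₀ := 0) hL
    (fun j _ => le_of_eq (by simp only [moserExponent])) (fun j _ => hu j) (fun j _ => hv j)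
    (Nat.zero_le k)
  rw [← range_eq_Ico] at hgronwall
  refine hgronwall.trans (mul_le_mul ?_ ?_ (exp_pos _).le ?_)
  · exact add_le_add_right (hvs.sum_le_tsum _ fun j _ => hv j) L
  · exact exp_le_exp.2 (hus.sum_le_tsum _ fun j _ => hu j)
  · exact add_nonneg hL (tsum_nonneg hv)

end moserExponent

lemma rpow_le_exp_mul {x y e : ℝ} (hx : 0 < x) (hy : 0 ≤ y) (h : log x ≤ e) :
    x ^ y ≤ exp (y * e) := by
  rw [rpow_def_of_pos hx, mul_comm]
  exact exp_le_exp.2 (mul_le_mul_of_nonneg_left h hy)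

lemma le_exp_of_deriv_add_mul_le {f g : ℝ → ℝ} {C₀ C₁ N p β β' : ℝ} {j : ℕ}
    (hC₀ : 0 < C₀) (hC₁ : 0 < C₁) (hp : 0 ≤ p) (hf : Differentiable ℝ f)
    (hineq : ∀ t, 0 ≤ t → deriv f t + C₀ * f t ≤ C₁ ^ N + C₁ ^ j * g t ^ p)
    (hg : ∀ t, 0 ≤ t → 0 ≤ g t ∧ g t ≤ exp β) (hf0 : f 0 ≤ exp β')
    (hN : log C₁ * N - log (C₀ / 2) ≤ β') (hj : j * log C₁ - log (C₀ / 2) + p * β ≤ β')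
    {t : ℝ} (ht : 0 ≤ t) : f t ≤ exp β' := by
  have hhalf : ∀ x, x - log (C₀ / 2) ≤ β' → exp x ≤ C₀ / 2 * exp β' := fun x hx => by
    rw [← exp_log (half_pos hC₀), ← exp_add]
    exact exp_le_exp.2 (by linarith)
  refine le_of_deriv_add_mul_le hf (fun s hs => (hineq s hs).trans ?_) hf0 ht
  obtain ⟨hg0, hgβ⟩ := hg s hs
  have h₁ : C₁ ^ N ≤ C₀ / 2 * exp β' := by
    rw [rpow_def_of_pos hC₁]
    exact hhalf _ hN
  have h₂ : C₁ ^ j * g s ^ p ≤ C₀ / 2 * exp β' := calc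
    C₁ ^ j * g s ^ p ≤ exp (j * log C₁) * exp (p * β) := by
      rw [exp_nat_mul, exp_log hC₁, mul_comm p, exp_mul]
      gcongr
    _ ≤ C₀ / 2 * exp β' := by
      rw [← exp_add]
      exact hhalf _ (by linarith)
  linarith

lemma le_exp_moserIndex_mul_moserExponent {a C₀ C₁ M : ℝ} {A : ℕ → ℝ → ℝ} (ha : -1 < a)
    (hC₀ : 0 < C₀) (hC₁ : 0 < C₁) (hM : 0 < M) (hdiff : ∀ k, Differentiable ℝ (A k))
    (hnn : ∀ k t, 0 ≤ t → 0 ≤ A k t)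
    (hineq : ∀ k : ℕ, 1 ≤ k → ∀ t : ℝ, 0 ≤ t → deriv (A k) t + C₀ * A k t ≤
      C₁ ^ moserIndex a k + C₁ ^ k * A (k - 1) t ^ (2 + C₁ / moserIndex a k))
    (h0 : ∀ k, A k 0 ≤ M ^ moserIndex a k)
    (hA0 : ∀ t : ℝ, 0 ≤ t → A 0 t ≤ M ^ moserIndex a 0) (k : ℕ) {t : ℝ} (ht : 0 ≤ t) :
    A k t ≤ exp (moserIndex a k *
      moserExponent (moserIndex a) (|a| + C₁) (|log C₁| + |log (C₀ / 2)| + |log M|) k) := by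
  set n := moserIndex a
  set L := |log C₁| + |log (C₀ / 2)| + |log M|
  set e := moserExponent n (|a| + C₁) L
  have hL : 0 ≤ L := by positivity
  have he : ∀ k, L ≤ e k := le_moserExponent (moserIndex_pos ha) (by positivity) hL
  have hMe : ∀ k, M ^ n k ≤ exp (n k * e k) := fun k =>
    rpow_le_exp_mul hM (moserIndex_pos ha k).le
      (by linarith [le_abs_self (log M), abs_nonneg (log C₁), abs_nonneg (log (C₀ / 2)), he k])
  induction k generalizing t with
  | zero => exact (hA0 t ht).trans (hMe 0)
  | succ k ih =>
    have hN : 1 ≤ n (k + 1) := one_le_moserIndex ha (k + 1)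
    have hineq' := hineq (k + 1) (Nat.le_add_left 1 k)
    simp only [Nat.add_sub_cancel] at hineq'
    refine le_exp_of_deriv_add_mul_le hC₀ hC₁ (by positivity) (hdiff _) hineq'
      (fun s hs => ⟨hnn k s hs, ih hs⟩) ((h0 _).trans (hMe _)) ?_ ?_ ht
    · have hNL : n (k + 1) * L ≤ n (k + 1) * e (k + 1) :=
        mul_le_mul_of_nonneg_left (he (k + 1)) (zero_le_one.trans hN)
      have : log C₁ * n (k + 1) ≤ |log C₁| * n (k + 1) := by gcongr; exact le_abs_self _
      have : |log (C₀ / 2)| ≤ |log (C₀ / 2)| * n (k + 1) :=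
        le_mul_of_one_le_right (abs_nonneg _) hN
      have : 0 ≤ |log M| * n (k + 1) := by positivity
      linarith [neg_abs_le (log (C₀ / 2))]
    · rw [mul_moserExponent_succ (moserIndex_pos ha _).ne']
      have hp : (2 + C₁ / n (k + 1)) * (n k * e k) ≤ (n (k + 1) + (|a| + C₁)) * e k := by
        rw [← mul_assoc, mul_comm _ (n k)]
        exact mul_le_mul_of_nonneg_right (moserIndex_mul_two_add_div_le ha hC₁.le k)
          (hL.trans (he k))
      have hk : (1 : ℝ) ≤ k + 1 := le_add_of_nonneg_left k.cast_nonneg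
      have : (k + 1) * log C₁ ≤ (k + 1) * |log C₁| := by gcongr; exact le_abs_self _
      have : |log (C₀ / 2)| ≤ (k + 1) * |log (C₀ / 2)| :=
        le_mul_of_one_le_left (abs_nonneg _) hk
      have : 0 ≤ (k + 1) * |log M| := by positivity
      push_cast
      linarith [neg_abs_le (log (C₀ / 2))]

theorem stmt_17 (a C₀ C₁ M : ℝ) (ha : -1 < a) (hC₀ : 0 < C₀) (hC₁ : 0 < C₁) (hM : 0 < M)
    (n : ℕ → ℝ) (hn : ∀ k : ℕ, n k = 2 ^ k * (a + 1) - a)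
    (A : ℕ → ℝ → ℝ) (hdiff : ∀ k, Differentiable ℝ (A k))
    (hnn : ∀ k t, 0 ≤ t → 0 ≤ A k t)
    (hineq : ∀ k : ℕ, 1 ≤ k → ∀ t : ℝ, 0 ≤ t →
      deriv (A k) t + C₀ * A k t ≤ C₁ ^ n k + C₁ ^ k * A (k - 1) t ^ (2 + C₁ / n k))
    (h0 : ∀ k, A k 0 ^ (n k)⁻¹ ≤ M)
    (hA0 : ∀ t : ℝ, 0 ≤ t → A 0 t ≤ M ^ n 0) :
    ∃ C : ℝ, ∀ k : ℕ, ∀ t : ℝ, 0 ≤ t → A k t ^ (n k)⁻¹ ≤ C := by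
  obtain rfl : n = moserIndex a := funext hn
  set L := |log C₁| + |log (C₀ / 2)| + |log M|
  have h0' : ∀ k, A k 0 ≤ M ^ moserIndex a k := fun k =>
    (rpow_inv_le_iff_of_pos (hnn k 0 le_rfl) hM.le (moserIndex_pos ha k)).1 (h0 k)
  refine ⟨exp ((L + ∑' j : ℕ, (j + 1) * L / moserIndex a (j + 1)) *
    exp (∑' j : ℕ, (|a| + C₁) / moserIndex a (j + 1))), fun k t ht => ?_⟩
  have hnk := moserIndex_pos ha k
  rw [rpow_inv_le_iff_of_pos (hnn k t ht) (exp_pos _).le hnk, ← exp_mul,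
    mul_comm _ (moserIndex a k)]
  refine (le_exp_moserIndex_mul_moserExponent ha hC₀ hC₁ hM hdiff hnn hineq h0' hA0 k ht).trans ?_
  exact exp_le_exp.2 <| mul_le_mul_of_nonneg_left (moserExponent_le_tsum (moserIndex_pos ha)
    (by positivity) (by positivity) (summable_succ_div_moserIndex_succ ha) k) hnk.le
end
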